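/- Suppose τ ∈ (0,1) and g is a horizontally valid two-dimensional move with g + gᵀ = t_τ. Then ĝ(α,2) ≤ 2/α + τ for every α ∈ [2,∞) (and ĝ(∞,2) ≤ τ). -/

import Mathlib

open scoped BigOperators Classical

noncomputable section

/-- The profile `P_x` of a point `x ∈ ℝ≥0`, viewed as a function on `[1,∞]`
(the extended reals `EReal` model the interval with its point `∞ = ⊤`):
`P_x(α) = 1` for `α ∈ [1,2)`, `P_x(α) = (xα - x)/(x + α - 2)` for `α ∈ [2,∞)`,
and `P_x(∞) = x` (with the conventions `P_0(α) = 0` for `α ∈ [2,∞]`, which the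
formula also yields since division by zero is zero). -/
def Pfun (x : ℝ) (α : EReal) : ℝ :=
  if α = ⊤ then x
  else if α.toReal < 2 then 1
  else (x * α.toReal - x) / (x + α.toReal - 2)

/-- A one-dimensional move: a finitely supported function on `ℝ≥0`
(modeled as a function on `ℝ` vanishing on the negatives). -/
def IsMove1 (f : ℝ → ℝ) : Prop :=
  (Function.support f).Finite ∧ ∀ x : ℝ, x < 0 → f x = 0

/-- Validity of a one-dimensional move. -/
def IsValid1 (f : ℝ → ℝ) : Prop :=
  (∑ᶠ x, f x) = 0 ∧
  (∀ lam : ℝ, 0 < lam → 0 ≤ ∑ᶠ x, (x / (x + lam)) * f x) ∧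
  0 ≤ ∑ᶠ x, x * f x

/-- The profile of a one-dimensional move. -/
def prof1 (f : ℝ → ℝ) (α : EReal) : ℝ := ∑ᶠ x, f x * Pfun x α

/-- A two-dimensional move: a finitely supported function on `ℝ≥0 × ℝ≥0`. -/
def IsMove2 (q : ℝ × ℝ → ℝ) : Prop :=
  (Function.support q).Finite ∧ ∀ p : ℝ × ℝ, p.1 < 0 ∨ p.2 < 0 → q p = 0

/-- A two-dimensional move is horizontally valid if all of its rows are valid. -/
def HorizValid (q : ℝ × ℝ → ℝ) : Prop := ∀ y : ℝ, IsValid1 fun x => q (x, y)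

/-- A two-dimensional move is vertically valid if all of its columns are valid. -/
def VertValid (q : ℝ × ℝ → ℝ) : Prop := ∀ x : ℝ, IsValid1 fun y => q (x, y)

/-- The two-variable profile of a two-dimensional move. -/
def prof2 (q : ℝ × ℝ → ℝ) (α β : EReal) : ℝ :=
  ∑ᶠ p : ℝ × ℝ, q p * Pfun p.1 α * Pfun p.2 β

/-- The transpose move `qᵀ(x,y) = q(y,x)`. -/
def transpose (q : ℝ × ℝ → ℝ) : ℝ × ℝ → ℝ := fun p => q (p.2, p.1)

/-- `pt x y` is the indicator move `⟦x,y⟧`. -/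
def pt (x y : ℝ) : ℝ × ℝ → ℝ := fun p => if p = (x, y) then 1 else 0

/-- The move `t_τ = 2·⟦1,1⟧ - ⟦2-τ,0⟧ - ⟦0,2-τ⟧`. -/
def tMove (τ : ℝ) : ℝ × ℝ → ℝ :=
  fun p => 2 * pt 1 1 p - pt (2 - τ) 0 p - pt 0 (2 - τ) p

/-- `slice g b` is the move `g_b`: the part of `g` on the horizontal line `y = b`. -/
def hslice (g : ℝ × ℝ → ℝ) (b : ℝ) : ℝ × ℝ → ℝ := fun p => if p.2 = b then g p else 0

/-!
Since `P_y(1) = 1` and `P_y(2) = [y ≠ 0]`, `ĝ(α,2) = ĝ(α,1) - R(α)`, where `R` is the profile of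
the row `y = 0` of `g`. For `α ≥ 2` a valid row has nonnegative profile: for `α ∈ (2,∞)` it is
`(α - 1) ∑ x/(x+α-2) f(x)`, at `α = 2` it is the limit of these sums as `α → 2⁺`, and at `∞` it is
`∑ x f(x)`. As the rows of `g` sum to zero, `ĝ(1,β) = 0`, hence `ĝ(α,1) = ĝ(α,1) + ĝᵀ(α,1)
= t̂_τ(α,1) = 2 P_1(α) - P_{2-τ}(α) - P_0(α)`, which is `2 - (2-τ)(α-1)/(α-τ) ≤ 2/α + τ` for finite
`α` and `τ` at `α = ∞`.
-/

open Function Filter Topology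

lemma Pfun_top (x : ℝ) : Pfun x ⊤ = x := by simp [Pfun]

lemma Pfun_one (x : ℝ) : Pfun x ((1 : ℝ) : EReal) = 1 := by
  rw [Pfun, if_neg (EReal.coe_ne_top 1), EReal.toReal_coe, if_pos one_lt_two]

lemma Pfun_of_two_le (x : ℝ) {α : ℝ} (hα : 2 ≤ α) :
    Pfun x α = (α - 1) * (x / (x + (α - 2))) := by
  rw [Pfun, if_neg (EReal.coe_ne_top α), EReal.toReal_coe, if_neg (not_lt.mpr hα)]
  ring

lemma Pfun_two (x : ℝ) : Pfun x ((2 : ℝ) : EReal) = if x = 0 then 0 else 1 := by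
  rw [Pfun_of_two_le x le_rfl]
  split_ifs with hx <;> norm_num [hx]

lemma IsValid1.finsum_div_add_mul_nonneg {f : ℝ → ℝ} (hf : HasFiniteSupport f)
    (hv : IsValid1 f) {lam : ℝ} (hlam : 0 ≤ lam) : 0 ≤ ∑ᶠ x, x / (x + lam) * f x := by
  rcases hlam.lt_or_eq with hlam | rfl
  · exact hv.2.1 lam hlam
  set s := hf.toFinset
  have hs : ∀ lam : ℝ, ∑ᶠ x, x / (x + lam) * f x = ∑ x ∈ s, x / (x + lam) * f x :=
    fun lam => finsum_eq_finsetSum_of_support_subset _ fun x hx =>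
      hf.mem_toFinset.mpr (support_mul_subset_right _ _ hx)
  -- `0 / (0 + lam) = 0` for all `lam`, so every summand is continuous at `lam = 0`.
  have hlim : Tendsto (fun lam => ∑ x ∈ s, x / (x + lam) * f x) (𝓝[>] 0)
      (𝓝 (∑ x ∈ s, x / (x + 0) * f x)) := by
    refine tendsto_finsetSum s fun x _ => ?_
    rcases eq_or_ne x 0 with rfl | hx
    · simp
    · exact ((continuousAt_const.div (continuousAt_const.add continuousAt_id) (by simpa)).mul
        continuousAt_const).tendsto.mono_left nhdsWithin_le_nhds
  rw [hs]
  exact ge_of_tendsto hlim (eventually_nhdsWithin_of_forall fun lam hlam => hs lam ▸ hv.2.1 lam hlam)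

lemma IsValid1.prof1_nonneg {f : ℝ → ℝ} (hf : HasFiniteSupport f) (hv : IsValid1 f)
    {α : EReal} (hα : ((2 : ℝ) : EReal) ≤ α) : 0 ≤ prof1 f α := by
  induction α using EReal.rec with
  | bot => exact absurd hα (by simp)
  | coe α =>
    have hα : 2 ≤ α := EReal.coe_le_coe_iff.mp hα
    have h : prof1 f α = (α - 1) * ∑ᶠ x, x / (x + (α - 2)) * f x := by
      rw [prof1, mul_finsum]
      exact finsum_congr fun x => by rw [Pfun_of_two_le x hα]; ring
    rw [h]
    exact mul_nonneg (by linarith) (hv.finsum_div_add_mul_nonneg hf (by linarith))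
  | top => simpa only [prof1, Pfun_top, mul_comm] using hv.2.2

lemma prof2_add {q r : ℝ × ℝ → ℝ} (hq : HasFiniteSupport q) (hr : HasFiniteSupport r)
    (α β : EReal) : prof2 (q + r) α β = prof2 q α β + prof2 r α β := by
  simp only [prof2, Pi.add_apply, add_mul]
  exact finsum_add_distrib (by fun_prop) (by fun_prop)

lemma prof2_sub {q r : ℝ × ℝ → ℝ} (hq : HasFiniteSupport q) (hr : HasFiniteSupport r)
    (α β : EReal) : prof2 (q - r) α β = prof2 q α β - prof2 r α β := by
  simp only [prof2, Pi.sub_apply, sub_mul]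
  exact finsum_sub_distrib (by fun_prop) (by fun_prop)

lemma prof2_smul (c : ℝ) (q : ℝ × ℝ → ℝ) (α β : EReal) :
    prof2 (c • q) α β = c * prof2 q α β := by
  simp only [prof2, mul_finsum, Pi.smul_apply, smul_eq_mul, mul_assoc]

@[fun_prop]
lemma hasFiniteSupport_pt (a b : ℝ) : HasFiniteSupport (pt a b) :=
  (Set.finite_singleton (a, b)).subset fun p hp => by
    by_contra h
    exact hp (if_neg h)

lemma prof2_pt (a b : ℝ) (α β : EReal) : prof2 (pt a b) α β = Pfun a α * Pfun b β := by
  rw [prof2, finsum_eq_single _ (a, b) fun p hp => by simp [pt, hp]]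
  simp [pt]

lemma prof2_tMove (τ : ℝ) (α β : EReal) :
    prof2 (tMove τ) α β =
      2 * (Pfun 1 α * Pfun 1 β) - Pfun (2 - τ) α * Pfun 0 β - Pfun 0 α * Pfun (2 - τ) β := by
  have h : tMove τ = (2 : ℝ) • pt 1 1 - pt (2 - τ) 0 - pt 0 (2 - τ) := rfl
  rw [h, prof2_sub (by fun_prop) (by fun_prop), prof2_sub (by fun_prop) (by fun_prop),
    prof2_smul, prof2_pt, prof2_pt, prof2_pt]

lemma Function.HasFiniteSupport.transpose {q : ℝ × ℝ → ℝ} (hq : HasFiniteSupport q) :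
    HasFiniteSupport (transpose q) :=
  hq.comp_of_injective Prod.swap_injective

lemma prof2_transpose (q : ℝ × ℝ → ℝ) (α β : EReal) :
    prof2 (transpose q) α β = prof2 q β α := by
  rw [prof2, prof2, ← finsum_comp_equiv (Equiv.prodComm ℝ ℝ)
    (f := fun p => q p * Pfun p.1 β * Pfun p.2 α)]
  exact finsum_congr fun p => by simp [transpose, Prod.swap, mul_right_comm]

lemma HorizValid.prof2_one_left {q : ℝ × ℝ → ℝ} (hq : HasFiniteSupport q) (hv : HorizValid q)
    (β : EReal) : prof2 q ((1 : ℝ) : EReal) β = 0 := by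
  rw [← prof2_transpose, prof2, finsum_curry _ (by have := hq.transpose; fun_prop)]
  simp only [transpose, Pfun_one, mul_one, ← finsum_mul, (hv _).1, zero_mul, finsum_zero]

lemma HorizValid.prof2_one_right_eq {q : ℝ × ℝ → ℝ} (hq : HasFiniteSupport q)
    (hv : HorizValid q) (α : EReal) :
    prof2 q α ((1 : ℝ) : EReal) = prof2 (q + transpose q) α ((1 : ℝ) : EReal) := by
  rw [prof2_add hq hq.transpose, prof2_transpose, hv.prof2_one_left hq, add_zero]

lemma prof2_two_right {q : ℝ × ℝ → ℝ} (hq : HasFiniteSupport q) (α : EReal) :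
    prof2 q α ((2 : ℝ) : EReal) =
      prof2 q α ((1 : ℝ) : EReal) - prof1 (fun x => q (x, 0)) α := by
  have hrow : prof1 (fun x => q (x, 0)) α =
      ∑ᶠ p : ℝ × ℝ, if p.2 = 0 then q p * Pfun p.1 α else 0 := by
    rw [finsum_curry _ (hq.subset fun p hp h => hp (by simp [h]))]
    exact finsum_congr fun x => by rw [finsum_eq_single _ (0 : ℝ) fun y hy => if_neg hy, if_pos rfl]
  rw [hrow, prof2, prof2, ← finsum_sub_distrib (by fun_prop)
    (hq.subset fun p hp h => hp (by simp [h]))]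
  exact finsum_congr fun p => by rw [Pfun_two, Pfun_one]; split_ifs <;> ring

lemma HorizValid.prof2_two_right_le {q : ℝ × ℝ → ℝ} (hq : HasFiniteSupport q)
    (hv : HorizValid q) {α : EReal} (hα : ((2 : ℝ) : EReal) ≤ α) :
    prof2 q α ((2 : ℝ) : EReal) ≤ prof2 (q + transpose q) α ((1 : ℝ) : EReal) := by
  have hrow : 0 ≤ prof1 (fun x => q (x, 0)) α :=
    (hv 0).prof1_nonneg (hq.comp_of_injective (Prod.mk_left_injective 0)) hα
  rw [prof2_two_right hq, ← hv.prof2_one_right_eq hq]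
  linarith

lemma two_mul_Pfun_one_sub_le {τ α : ℝ} (hτ0 : 0 ≤ τ) (hτ1 : τ ≤ 1) (hα : 2 ≤ α) :
    2 * Pfun 1 α - Pfun (2 - τ) α - Pfun 0 α ≤ 2 / α + τ := by
  have hατ : 0 < α - τ := by linarith
  rw [Pfun_of_two_le _ hα, Pfun_of_two_le _ hα, Pfun_of_two_le _ hα,
    show (1 : ℝ) + (α - 2) = α - 1 by ring, show 2 - τ + (α - 2) = α - τ by ring,
    mul_one_div_cancel (by linarith), zero_div, mul_zero, sub_zero]
  have h : 2 / α + τ - (2 * 1 - (α - 1) * ((2 - τ) / (α - τ))) =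
      τ * ((3 - τ) * α - 2) / (α * (α - τ)) := by
    field_simp
    ring
  have : 0 ≤ τ * ((3 - τ) * α - 2) / (α * (α - τ)) :=
    div_nonneg (mul_nonneg hτ0 (by nlinarith)) (by positivity)
  linarith

/-- If `g` is horizontally valid and `g + gᵀ = t_τ`, then `ĝ(α,2) ≤ 2/α + τ`
for all `α ∈ [2,∞)`, and `ĝ(∞,2) ≤ τ`. -/
theorem stmt_10 (τ : ℝ) (hτ : τ ∈ Set.Ioo (0 : ℝ) 1)
    (g : ℝ × ℝ → ℝ) (hmove : IsMove2 g) (hval : HorizValid g)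
    (hsum : ∀ p, g p + transpose g p = tMove τ p) :
    (∀ α : ℝ, 2 ≤ α →
      prof2 g ((α : ℝ) : EReal) ((2 : ℝ) : EReal) ≤ 2 / α + τ) ∧
    prof2 g ⊤ ((2 : ℝ) : EReal) ≤ τ := by
  have key {α : EReal} (hα : ((2 : ℝ) : EReal) ≤ α) :
      prof2 g α ((2 : ℝ) : EReal) ≤ 2 * Pfun 1 α - Pfun (2 - τ) α - Pfun 0 α := by
    have h := hval.prof2_two_right_le hmove.1 hα
    rw [show g + transpose g = tMove τ from funext hsum, prof2_tMove] at h
    simpa only [Pfun_one, mul_one] using h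
  refine ⟨fun α hα => ?_, ?_⟩
  · exact (key (EReal.coe_le_coe_iff.mpr hα)).trans (two_mul_Pfun_one_sub_le hτ.1.le hτ.2.le hα)
  · exact (key le_top).trans_eq (by rw [Pfun_top, Pfun_top, Pfun_top]; ring)
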